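/- Let X, Y be compact metric spaces, f : X → X and g : Y → Y continuous surjections, and φ : X̄ → Ȳ a continuous map between the inverse limits with ḡ∘φ = φ∘f̄. Suppose there exist l ∈ ℕ and ε > 0 such that for all u, v ∈ Y, g^l(u) ≠ g^l(v) implies there is K ≥ 0 with d(g^K(u), g^K(v)) ≥ ε. Then there exists n ∈ ℕ such that for all a, b ∈ X̄, π_n(a) = π_n(b) implies π₀(φ(a)) = π₀(φ(b)), where π_i denotes projection of the inverse limit onto its i-th coordinate. -/

import Mathlib

/-! Since `f(x_{n+1}) = x_n`, the shift `f̄` acts on every coordinate as `f`, so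
`π₀ ∘ φ ∘ f̄ᴷ = gᴷ ∘ π₀ ∘ φ`. By compactness of `X̄` and continuity of `φ`, agreement at some
coordinate `N` forces the `π₀ ∘ φ`-images to be `ε`-close. If `π₀(φ a) ≠ π₀(φ b)` although `a`
and `b` agree at coordinate `N + l`, write `a = f̄ˡ a'`, `b = f̄ˡ b'`: the expansivity of `g`
yields `K` with `π₀(φ(f̄ᴷ a'))` and `π₀(φ(f̄ᴷ b'))` at distance `≥ ε`, while `f̄ᴷ a'` and
`f̄ᴷ b'` agree at coordinate `N`. -/

/-- The inverse limit of a self-map `f : X → X`. -/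
def InvLim {X : Type*} (f : X → X) : Type _ :=
  {x : ℕ → X // ∀ n, f (x (n + 1)) = x n}

instance {X : Type*} [TopologicalSpace X] (f : X → X) : TopologicalSpace (InvLim f) :=
  inferInstanceAs (TopologicalSpace {x : ℕ → X // ∀ n, f (x (n + 1)) = x n})

/-- The shift map `f̄(x₀,x₁,…) = (f(x₀),x₀,x₁,…)` on the inverse limit. -/
def shiftMap {X : Type*} (f : X → X) (x : InvLim f) : InvLim f :=
  ⟨fun n => Nat.casesOn n (f (x.1 0)) (fun k => x.1 k), by
    intro n
    cases n with
    | zero => rfl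
    | succ k => exact x.2 k⟩

namespace InvLim

variable {X : Type*} {f : X → X}

theorem iterate_apply_add (x : InvLim f) (k n : ℕ) : f^[k] (x.1 (n + k)) = x.1 n := by
  induction k with
  | zero => rfl
  | succ k ih => rw [Function.iterate_succ_apply, ← add_assoc, x.2, ih]

theorem apply_eq_of_le {a b : InvLim f} {i n : ℕ} (hin : i ≤ n) (h : a.1 n = b.1 n) :
    a.1 i = b.1 i := by
  obtain ⟨k, rfl⟩ := Nat.exists_eq_add_of_le hin
  rw [← iterate_apply_add a k i, ← iterate_apply_add b k i, h]

theorem shiftMap_apply (x : InvLim f) (n : ℕ) : (shiftMap f x).1 n = f (x.1 n) := by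
  cases n with
  | zero => rfl
  | succ n => exact (x.2 n).symm

theorem iterate_shiftMap_apply (x : InvLim f) (k n : ℕ) :
    ((shiftMap f)^[k] x).1 n = f^[k] (x.1 n) := by
  induction k with
  | zero => rfl
  | succ k ih => rw [Function.iterate_succ_apply', shiftMap_apply, ih, Function.iterate_succ_apply']

def drop (l : ℕ) (x : InvLim f) : InvLim f :=
  ⟨fun n => x.1 (n + l), fun n => by
    show f (x.1 (n + 1 + l)) = x.1 (n + l)
    rw [Nat.add_right_comm]
    exact x.2 (n + l)⟩

theorem iterate_shiftMap_drop (l : ℕ) (x : InvLim f) : (shiftMap f)^[l] (drop l x) = x :=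
  Subtype.ext <| funext fun n => (iterate_shiftMap_apply _ l n).trans (iterate_apply_add x l n)

theorem compactSpace [TopologicalSpace X] [CompactSpace X] [T2Space X] (hf : Continuous f) :
    CompactSpace (InvLim f) := by
  have hclosed : IsClosed {x : ℕ → X | ∀ n, f (x (n + 1)) = x n} := by
    simp only [Set.ofPred_forall]
    exact isClosed_iInter fun n =>
      isClosed_eq (hf.comp (continuous_apply (n + 1))) (continuous_apply n)
  exact isCompact_iff_compactSpace.mp hclosed.isCompact

theorem exists_apply_eq_imp_mem [TopologicalSpace X] [T2Space X] [CompactSpace (InvLim f)]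
    {U : Set (InvLim f × InvLim f)} (hU : IsOpen U) (hdiag : ∀ a, (a, a) ∈ U) :
    ∃ N, ∀ a b : InvLim f, a.1 N = b.1 N → (a, b) ∈ U := by
  have hcont (N : ℕ) : Continuous fun a : InvLim f => a.1 N :=
    (continuous_apply N).comp continuous_subtype_val
  obtain ⟨N, hN⟩ := exists_subset_nhds_of_compactSpace
    (V := fun N => {p : InvLim f × InvLim f | p.1.1 N = p.2.1 N})
    (antitone_nat_of_succ_le fun N _ hp => apply_eq_of_le N.le_succ hp).directed_ge
    (fun N => isClosed_eq ((hcont N).comp continuous_fst) ((hcont N).comp continuous_snd))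
    (fun ⟨a, b⟩ hp => by
      obtain rfl : a = b := Subtype.ext <| funext <| Set.mem_iInter.mp hp
      exact hU.mem_nhds (hdiag a))
  exact ⟨N, fun a b h => hN h⟩

theorem apply_zero_iterate_shiftMap {Y : Type*} {g : Y → Y} {φ : InvLim f → InvLim g}
    (hcomm : Function.Semiconj φ (shiftMap f) (shiftMap g)) (k : ℕ) (x : InvLim f) :
    (φ ((shiftMap f)^[k] x)).1 0 = g^[k] ((φ x).1 0) := by
  rw [(hcomm.iterate_right k).eq, iterate_shiftMap_apply]

end InvLim

theorem stmt13_general {X Y : Type*} [MetricSpace X] [CompactSpace X]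
    [MetricSpace Y]
    (f : X → X) (g : Y → Y) (hf : Continuous f)
    (φ : InvLim f → InvLim g) (hφ : Continuous φ)
    (hcomm : ∀ x, φ (shiftMap f x) = shiftMap g (φ x))
    (l : ℕ) (ε : ℝ) (hε : 0 < ε)
    (hexp : ∀ u v : Y, g^[l] u ≠ g^[l] v → ∃ K : ℕ, ε ≤ dist (g^[K] u) (g^[K] v)) :
    ∃ n : ℕ, ∀ a b : InvLim f, a.1 n = b.1 n → (φ a).1 0 = (φ b).1 0 := by
  have := InvLim.compactSpace hf
  have hφ₀ : Continuous fun a => (φ a).1 0 :=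
    (continuous_apply 0).comp (continuous_subtype_val.comp hφ)
  obtain ⟨N, hN⟩ := InvLim.exists_apply_eq_imp_mem
    (U := {p | dist ((φ p.1).1 0) ((φ p.2).1 0) < ε})
    (isOpen_lt ((hφ₀.comp continuous_fst).dist (hφ₀.comp continuous_snd)) continuous_const)
    (fun a => by simpa using hε)
  refine ⟨N + l, fun a b hab => by_contra fun hne => ?_⟩
  have hshift := InvLim.apply_zero_iterate_shiftMap (g := g) (φ := φ) hcomm
  rw [← InvLim.iterate_shiftMap_drop l a, ← InvLim.iterate_shiftMap_drop l b,
    hshift, hshift] at hne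
  obtain ⟨K, hK⟩ := hexp _ _ hne
  rw [← hshift, ← hshift] at hK
  refine (hN _ _ ?_).not_ge hK
  rw [InvLim.iterate_shiftMap_apply, InvLim.iterate_shiftMap_apply]
  exact congrArg _ hab

/-- Lemma 2.16: if `φ : X̄ → Ȳ` is continuous with `ḡ∘φ = φ∘f̄`, and `g`
satisfies the weak expansivity condition of Lemma 2.8, then there is `n` such that
`π_n(a) = π_n(b)` implies `π₀(φ(a)) = π₀(φ(b))`. -/
theorem stmt13 {X Y : Type*} [MetricSpace X] [CompactSpace X]
    [MetricSpace Y] [CompactSpace Y]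
    (f : X → X) (g : Y → Y) (hf : Continuous f) (hg : Continuous g)
    (hfs : Function.Surjective f) (hgs : Function.Surjective g)
    (φ : InvLim f → InvLim g) (hφ : Continuous φ)
    (hcomm : ∀ x, φ (shiftMap f x) = shiftMap g (φ x))
    (l : ℕ) (ε : ℝ) (hε : 0 < ε)
    (hexp : ∀ u v : Y, g^[l] u ≠ g^[l] v → ∃ K : ℕ, ε ≤ dist (g^[K] u) (g^[K] v)) :
    ∃ n : ℕ, ∀ a b : InvLim f, a.1 n = b.1 n → (φ a).1 0 = (φ b).1 0 :=
  stmt13_general f g hf φ hφ hcomm l ε hε hexp
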